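/- arXiv:1803.02776 — 3 statements merged into one kernel-verified Lean document; each statement's English description precedes it below -/
import Mathlib

section
/- First-order logic (over unary predicates including Active, binary predicates, and equality) is closed under the substitutions induced by all elementary actions: for every first-order sentence φ and every elementary action a among node addition, node deletion, concept addition, concept deletion, edge addition, edge deletion, global edge redirection i ≫ j, merge mrg(i,j), and clone cl(i,j,...), there exists a first-order sentence ψ (with no substitution operator) such that for all graphs G, G ⊨ ψ if and only if G[a] ⊨ φ. -/
/-- First-order interpretations induced by logically decorated graphs: a domain `V`
(containing the node set), the distinguished unary predicate `Active` (the node set),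
unary predicates (concepts) `C` and binary predicates (roles) `R`. -/
structure FOInterp (V C R : Type) where
  active : Set V
  conc : C → Set V
  rel : R → Set (V × V)

/-- First-order terms: variables and node constants. -/
inductive Tm (V : Type) where
  | var : ℕ → Tm V
  | cst : V → Tm V

def evalTm {V : Type} (v : ℕ → V) : Tm V → V
  | .var n => v n
  | .cst x => x

def freeTm {V : Type} : Tm V → Set ℕ
  | .var n => {n}
  | .cst _ => ∅

/-- First-order formulas over unary predicates (including `Active`), binary
predicates and equality. -/
inductive FO (V C R : Type) where
  | tru : FO V C R
  | act (t : Tm V) : FO V C R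
  | conc (c : C) (t : Tm V) : FO V C R
  | rel (r : R) (t u : Tm V) : FO V C R
  | eq (t u : Tm V) : FO V C R
  | not (φ : FO V C R) : FO V C R
  | or (φ ψ : FO V C R) : FO V C R
  | ex (x : ℕ) (φ : FO V C R) : FO V C R

/-- Free variables of a formula. -/
def freeV {V C R : Type} : FO V C R → Set ℕ
  | .tru => ∅
  | .act t => freeTm t
  | .conc _ t => freeTm t
  | .rel _ t u => freeTm t ∪ freeTm u
  | .eq t u => freeTm t ∪ freeTm u
  | .not φ => freeV φ
  | .or φ ψ => freeV φ ∪ freeV ψ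
  | .ex x φ => freeV φ \ {x}

/-- Satisfaction of a first-order formula in an interpretation under a valuation. -/
def Sat {V C R : Type} (I : FOInterp V C R) : (ℕ → V) → FO V C R → Prop
  | _, .tru => True
  | v, .act t => evalTm v t ∈ I.active
  | v, .conc c t => evalTm v t ∈ I.conc c
  | v, .rel r t u => (evalTm v t, evalTm v u) ∈ I.rel r
  | v, .eq t u => evalTm v t = evalTm v u
  | v, .not φ => ¬ Sat I v φ
  | v, .or φ ψ => Sat I v φ ∨ Sat I v ψ
  | v, .ex x φ => ∃ n : V, Sat I (Function.update v x n) φ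

/-- The elementary actions. -/
inductive EAct (V C R : Type) where
  | addN (i : V)
  | delN (i : V)
  | addC (i : V) (c : C)
  | delC (i : V) (c : C)
  | addE (i j : V) (r : R)
  | delE (i j : V) (r : R)
  | redir (i j : V)                                  -- global edge redirection i ≫ j
  | merge (i j : V)                                  -- mrg(i,j)
  | clone (i j : V) (Lin Lout Llin Llout Lll : Set R) -- cl(i,j,…)

/-- The effect of an elementary action on the induced first-order interpretation
(`C0` is the set of basic concepts, used by cloning). -/
def applyA {V C R : Type} (C0 : Set C) (I : FOInterp V C R) : EAct V C R → FOInterp V C R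
  | .addN i => { I with active := I.active ∪ {i} }
  | .delN i =>
      { active := I.active \ {i},
        conc := fun c => I.conc c \ {i},
        rel := fun r => {p ∈ I.rel r | p.1 ≠ i ∧ p.2 ≠ i} }
  | .addC i c => { I with conc := fun c' => I.conc c' ∪ {x | x = i ∧ c' = c} }
  | .delC i c => { I with conc := fun c' => I.conc c' \ {x | x = i ∧ c' = c} }
  | .addE i j r => { I with rel := fun r' => I.rel r' ∪ {p | p = (i, j) ∧ r' = r} }
  | .delE i j r => { I with rel := fun r' => I.rel r' \ {p | p = (i, j) ∧ r' = r} }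
  | .redir i j =>
      { I with rel := fun r =>
          {p | (p ∈ I.rel r ∧ p.2 ≠ i) ∨ ((p.1, i) ∈ I.rel r ∧ p.2 = j)} }
  | .merge i j =>
      { active := I.active \ {j},
        conc := fun c => {x | x ≠ j ∧ (x ∈ I.conc c ∨ (x = i ∧ j ∈ I.conc c))},
        rel := fun r => {p | p.1 ≠ j ∧ p.2 ≠ j ∧
          (p ∈ I.rel r ∨ ((p.1, j) ∈ I.rel r ∧ p.2 = i) ∨
           ((j, p.2) ∈ I.rel r ∧ p.1 = i) ∨
           (p.1 = i ∧ p.2 = i ∧ (j, j) ∈ I.rel r))} }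
  | .clone i j Lin Lout Llin Llout Lll =>
      { active := I.active ∪ {j},
        conc := fun c => I.conc c ∪ {x | x = j ∧ c ∈ C0 ∧ i ∈ I.conc c},
        rel := fun r => I.rel r ∪ {p |
          (r ∈ Lin ∧ (p.1, i) ∈ I.rel r ∧ p.1 ≠ i ∧ p.2 = j) ∨
          (r ∈ Lout ∧ (i, p.2) ∈ I.rel r ∧ p.2 ≠ i ∧ p.1 = j) ∨
          (r ∈ Llin ∧ (i, i) ∈ I.rel r ∧ p.1 = i ∧ p.2 = j) ∨
          (r ∈ Llout ∧ (i, i) ∈ I.rel r ∧ p.1 = j ∧ p.2 = i) ∨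
          (r ∈ Lll ∧ (i, i) ∈ I.rel r ∧ p.1 = j ∧ p.2 = j)} }



/-!
Each elementary action changes the interpretation only by adding or removing finitely many
explicitly named nodes, concept memberships and edges, so every atom of `G[a]` is equivalent
in `G` to a quantifier-free formula in the same terms and the node constants of `a`.
Replacing each atom of `φ` by that formula commutes with the connectives and quantifiers,
and introduces no variables, so sentences go to sentences.
-/

namespace FO

variable {V C R : Type}

def and (φ ψ : FO V C R) : FO V C R := .not (.or (.not φ) (.not ψ))

def fls : FO V C R := .not .tru

@[simp] lemma sat_and (I : FOInterp V C R) (v : ℕ → V) (φ ψ : FO V C R) :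
    Sat I v (φ.and ψ) ↔ Sat I v φ ∧ Sat I v ψ := by
  simp [FO.and, Sat]

@[simp] lemma sat_fls (I : FOInterp V C R) (v : ℕ → V) : ¬ Sat I v (fls : FO V C R) := by
  simp [fls, Sat]

@[simp] lemma freeV_and (φ ψ : FO V C R) : freeV (φ.and ψ) = freeV φ ∪ freeV ψ := by
  simp [FO.and, freeV]

@[simp] lemma freeV_fls : freeV (fls : FO V C R) = ∅ := by
  simp [fls, freeV]

end FO

/-- Formulas defining the atoms of `F I` inside `I`, uniformly in `I`, without
introducing variables beyond the terms of the atom. -/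
structure AtomDefinition {V C R : Type} (F : FOInterp V C R → FOInterp V C R) where
  act : Tm V → FO V C R
  conc : C → Tm V → FO V C R
  rel : R → Tm V → Tm V → FO V C R
  freeV_act : ∀ t, freeV (act t) ⊆ freeTm t
  freeV_conc : ∀ c t, freeV (conc c t) ⊆ freeTm t
  freeV_rel : ∀ r t u, freeV (rel r t u) ⊆ freeTm t ∪ freeTm u
  sat_act : ∀ I v t, Sat I v (act t) ↔ evalTm v t ∈ (F I).active
  sat_conc : ∀ I v c t, Sat I v (conc c t) ↔ evalTm v t ∈ (F I).conc c
  sat_rel : ∀ I v r t u, Sat I v (rel r t u) ↔ (evalTm v t, evalTm v u) ∈ (F I).rel r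

namespace AtomDefinition

variable {V C R : Type} {F : FOInterp V C R → FOInterp V C R}

def pullback (D : AtomDefinition F) : FO V C R → FO V C R
  | .tru => .tru
  | .act t => D.act t
  | .conc c t => D.conc c t
  | .rel r t u => D.rel r t u
  | .eq t u => .eq t u
  | .not φ => .not (D.pullback φ)
  | .or φ ψ => .or (D.pullback φ) (D.pullback ψ)
  | .ex x φ => .ex x (D.pullback φ)

lemma freeV_pullback_subset (D : AtomDefinition F) (φ : FO V C R) :
    freeV (D.pullback φ) ⊆ freeV φ := by
  induction φ with
  | tru | eq => exact subset_rfl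
  | act t => exact D.freeV_act t
  | conc c t => exact D.freeV_conc c t
  | rel r t u => exact D.freeV_rel r t u
  | not φ ih => exact ih
  | or φ ψ ihφ ihψ => exact Set.union_subset_union ihφ ihψ
  | ex x φ ih => exact Set.sdiff_subset_sdiff_left ih

lemma sat_pullback (D : AtomDefinition F) (φ : FO V C R) (I : FOInterp V C R) (v : ℕ → V) :
    Sat I v (D.pullback φ) ↔ Sat (F I) v φ := by
  induction φ generalizing v with
  | tru | eq => rfl
  | act t => exact D.sat_act I v t
  | conc c t => exact D.sat_conc I v c t
  | rel r t u => exact D.sat_rel I v r t u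
  | not φ ih => exact not_congr (ih v)
  | or φ ψ ihφ ihψ => exact or_congr (ihφ v) (ihψ v)
  | ex x φ ih => exact exists_congr fun n => ih _

end AtomDefinition

namespace EAct

variable {V C R : Type}

def activeDef (a : EAct V C R) (t : Tm V) : FO V C R :=
  match a with
  | .addN i => .or (.act t) (.eq t (.cst i))
  | .delN i => .and (.act t) (.not (.eq t (.cst i)))
  | .merge _ j => .and (.act t) (.not (.eq t (.cst j)))
  | .clone _ j _ _ _ _ _ => .or (.act t) (.eq t (.cst j))
  | .addC .. | .delC .. | .addE .. | .delE .. | .redir .. => .act t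

open Classical in
noncomputable def concDef (C0 : Set C) (a : EAct V C R) (c : C) (t : Tm V) : FO V C R :=
  match a with
  | .delN i => .and (.conc c t) (.not (.eq t (.cst i)))
  | .addC i c' => if c = c' then .or (.conc c t) (.eq t (.cst i)) else .conc c t
  | .delC i c' => if c = c' then .and (.conc c t) (.not (.eq t (.cst i))) else .conc c t
  | .merge i j => .and (.not (.eq t (.cst j)))
      (.or (.conc c t) (.and (.eq t (.cst i)) (.conc c (.cst j))))
  | .clone i j _ _ _ _ _ =>
      if c ∈ C0 then .or (.conc c t) (.and (.eq t (.cst j)) (.conc c (.cst i))) else .conc c t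
  | .addN _ | .addE .. | .delE .. | .redir .. => .conc c t

open Classical in
noncomputable def relDef (a : EAct V C R) (r : R) (t u : Tm V) : FO V C R :=
  match a with
  | .delN i => .and (.rel r t u) (.and (.not (.eq t (.cst i))) (.not (.eq u (.cst i))))
  | .addE i j r' =>
      if r = r' then .or (.rel r t u) (.and (.eq t (.cst i)) (.eq u (.cst j))) else .rel r t u
  | .delE i j r' =>
      if r = r' then .and (.rel r t u) (.not (.and (.eq t (.cst i)) (.eq u (.cst j))))
      else .rel r t u
  | .redir i j => .or (.and (.rel r t u) (.not (.eq u (.cst i))))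
      (.and (.rel r t (.cst i)) (.eq u (.cst j)))
  | .merge i j => .and (.not (.eq t (.cst j))) (.and (.not (.eq u (.cst j)))
      (.or (.rel r t u) (.or (.and (.rel r t (.cst j)) (.eq u (.cst i)))
        (.or (.and (.rel r (.cst j) u) (.eq t (.cst i)))
          (.and (.eq t (.cst i)) (.and (.eq u (.cst i)) (.rel r (.cst j) (.cst j))))))))
  | .clone i j Lin Lout Llin Llout Lll =>
      .or (.rel r t u) (.or
        (if r ∈ Lin then .and (.rel r t (.cst i))
            (.and (.not (.eq t (.cst i))) (.eq u (.cst j))) else .fls) (.or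
        (if r ∈ Lout then .and (.rel r (.cst i) u)
            (.and (.not (.eq u (.cst i))) (.eq t (.cst j))) else .fls) (.or
        (if r ∈ Llin then .and (.rel r (.cst i) (.cst i))
            (.and (.eq t (.cst i)) (.eq u (.cst j))) else .fls) (.or
        (if r ∈ Llout then .and (.rel r (.cst i) (.cst i))
            (.and (.eq t (.cst j)) (.eq u (.cst i))) else .fls)
        (if r ∈ Lll then .and (.rel r (.cst i) (.cst i))
            (.and (.eq t (.cst j)) (.eq u (.cst j))) else .fls)))))
  | .addN _ | .addC .. | .delC .. => .rel r t u

lemma freeV_activeDef (a : EAct V C R) (t : Tm V) : freeV (a.activeDef t) ⊆ freeTm t := by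
  cases a <;> simp [activeDef, freeV, freeTm]

lemma freeV_concDef (C0 : Set C) (a : EAct V C R) (c : C) (t : Tm V) :
    freeV (a.concDef C0 c t) ⊆ freeTm t := by
  cases a <;> simp only [concDef] <;> (repeat' split) <;> simp [freeV, freeTm]

lemma freeV_relDef (a : EAct V C R) (r : R) (t u : Tm V) :
    freeV (a.relDef r t u) ⊆ freeTm t ∪ freeTm u := by
  cases a <;> simp only [relDef] <;> (repeat' split) <;> simp [freeV, freeTm]

lemma sat_activeDef (C0 : Set C) (a : EAct V C R) (I : FOInterp V C R) (v : ℕ → V)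
    (t : Tm V) : Sat I v (a.activeDef t) ↔ evalTm v t ∈ (applyA C0 I a).active := by
  cases a <;> simp [activeDef, applyA, Sat, evalTm] <;> tauto

lemma sat_concDef (C0 : Set C) (a : EAct V C R) (I : FOInterp V C R) (v : ℕ → V)
    (c : C) (t : Tm V) : Sat I v (a.concDef C0 c t) ↔ evalTm v t ∈ (applyA C0 I a).conc c := by
  cases a <;> simp only [concDef] <;> (repeat' split) <;>
    simp_all [applyA, Sat, evalTm, or_comm]

lemma sat_relDef (C0 : Set C) (a : EAct V C R) (I : FOInterp V C R) (v : ℕ → V)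
    (r : R) (t u : Tm V) :
    Sat I v (a.relDef r t u) ↔ (evalTm v t, evalTm v u) ∈ (applyA C0 I a).rel r := by
  cases a <;> simp only [relDef] <;> (repeat' split) <;>
    simp_all [applyA, Sat, evalTm] <;> tauto

noncomputable def atomDefinition (C0 : Set C) (a : EAct V C R) :
    AtomDefinition (fun I => applyA C0 I a) where
  act := a.activeDef
  conc := a.concDef C0
  rel := a.relDef
  freeV_act := a.freeV_activeDef
  freeV_conc := a.freeV_concDef C0
  freeV_rel := a.freeV_relDef
  sat_act I := a.sat_activeDef C0 I
  sat_conc I := a.sat_concDef C0 I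
  sat_rel I := a.sat_relDef C0 I

end EAct

/-- First-order logic is closed under the substitutions induced by all elementary
actions: for every sentence `φ` and elementary action `a` there is a sentence `ψ`
(without substitution operator) such that for all graphs `G`, `G ⊨ ψ ⟺ G[a] ⊨ φ`. -/
theorem fo_closed_under_substitutions {V C R : Type}
    (C0 : Set C) (a : EAct V C R) (φ : FO V C R) (hφ : freeV φ = ∅) :
    ∃ ψ : FO V C R, freeV ψ = ∅ ∧
      ∀ (I : FOInterp V C R) (v : ℕ → V), Sat I v ψ ↔ Sat (applyA C0 I a) v φ := by
  let D := a.atomDefinition C0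
  refine ⟨D.pullback φ, ?_, D.sat_pullback φ⟩
  exact Set.subset_empty_iff.mp (hφ ▸ D.freeV_pullback_subset φ)
end

section
/- An ALCQUO-bisimulation preserves all ALCQUO concepts: if Z is an ALCQUO-bisimulation between interpretations I₁ and I₂, then for every ALCQUO concept C and all x₁ ∈ Δ₁, x₂ ∈ Δ₂ with x₁ Z x₂, we have x₁ ∈ C^{I₁} if and only if x₂ ∈ C^{I₂}. -/
/-- An interpretation for description logics with atomic concepts `C`, roles `R`
and nominals `O`, over domain `Δ`. -/
structure DLI (C R O Δ : Type) where
  conc : C → Set Δ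
  rel : R → Set (Δ × Δ)
  nom : O → Δ

/-- ALCQUO concepts: ⊤, atomic concepts, nominals, ¬, ∨, ∃R.C, the universal role
∃U.C, and counting quantifiers (< n R C). -/
inductive CQ (C R O : Type) where
  | top : CQ C R O
  | atom (c : C) : CQ C R O
  | nomC (o : O) : CQ C R O
  | neg (φ : CQ C R O) : CQ C R O
  | or (φ ψ : CQ C R O) : CQ C R O
  | ex (r : R) (φ : CQ C R O) : CQ C R O
  | exU (φ : CQ C R O) : CQ C R O
  | lt (n : ℕ) (r : R) (φ : CQ C R O) : CQ C R O

/-- Satisfaction of an ALCQUO concept at an element of an interpretation.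
`(< n R φ)` holds at `d` iff `d` has fewer than `n` `R`-successors satisfying `φ`. -/
def dsat {C R O Δ : Type} (I : DLI C R O Δ) : Δ → CQ C R O → Prop
  | _, .top => True
  | d, .atom c => d ∈ I.conc c
  | d, .nomC o => d = I.nom o
  | d, .neg φ => ¬ dsat I d φ
  | d, .or φ ψ => dsat I d φ ∨ dsat I d ψ
  | d, .ex r φ => ∃ d', (d, d') ∈ I.rel r ∧ dsat I d' φ
  | _, .exU φ => ∃ d', dsat I d' φ
  | d, .lt n r φ =>
      ¬ ∃ f : Fin n → Δ, Function.Injective f ∧ ∀ k, (d, f k) ∈ I.rel r ∧ dsat I (f k) φ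

/-- `Z` is an ALCQUO-bisimulation between `I` and `J`. -/
structure IsBisim {C R O Δ₁ Δ₂ : Type} (I : DLI C R O Δ₁) (J : DLI C R O Δ₂)
    (Z : Δ₁ → Δ₂ → Prop) : Prop where
  nonempty : ∃ d₁ d₂, Z d₁ d₂
  alc1 : ∀ d₁ d₂, Z d₁ d₂ → ∀ c, d₁ ∈ I.conc c ↔ d₂ ∈ J.conc c
  alc2 : ∀ d₁ d₂ e₁ r, Z d₁ d₂ → (d₁, e₁) ∈ I.rel r → ∃ e₂, (d₂, e₂) ∈ J.rel r ∧ Z e₁ e₂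
  alc3 : ∀ d₁ d₂ e₂ r, Z d₁ d₂ → (d₂, e₂) ∈ J.rel r → ∃ e₁, (d₁, e₁) ∈ I.rel r ∧ Z e₁ e₂
  alc4 : ∀ o, Z (I.nom o) (J.nom o)
  nomO : ∀ d₁ d₂, Z d₁ d₂ → ∀ o, (d₁ = I.nom o ↔ d₂ = J.nom o)
  u1 : ∀ d₁, ∃ d₂, Z d₁ d₂
  u2 : ∀ d₂, ∃ d₁, Z d₁ d₂
  q : ∀ d₁ d₂ r, Z d₁ d₂ →
      (∀ e₁, (d₁, e₁) ∈ I.rel r → ∃! e₂, ((d₂, e₂) ∈ J.rel r ∧ Z e₁ e₂)) ∧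
      (∀ e₂, (d₂, e₂) ∈ J.rel r → ∃! e₁, ((d₁, e₁) ∈ I.rel r ∧ Z e₁ e₂))

/-!
Structural induction on the concept. It suffices to prove the implication from `I` to `J`,
provided it is proved for all bisimulations at once: the converse of a bisimulation is a
bisimulation, which yields the other implication and handles negation and the counting
quantifiers, whose satisfaction is negative. For `(< n R C)`, condition (Q) sends `n` distinct
`R`-successors to `n` partners that are again distinct, since each partner has only one
`Z`-preimage among the successors.
-/

namespace IsBisim

variable {C R O Δ₁ Δ₂ : Type} {I : DLI C R O Δ₁} {J : DLI C R O Δ₂} {Z : Δ₁ → Δ₂ → Prop}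

theorem symm (h : IsBisim I J Z) : IsBisim J I (flip Z) where
  nonempty := let ⟨d₁, d₂, hz⟩ := h.nonempty; ⟨d₂, d₁, hz⟩
  alc1 d₂ d₁ hz c := (h.alc1 d₁ d₂ hz c).symm
  alc2 d₂ d₁ e₂ r hz he := h.alc3 d₁ d₂ e₂ r hz he
  alc3 d₂ d₁ e₁ r hz he := h.alc2 d₁ d₂ e₁ r hz he
  alc4 := h.alc4
  nomO d₂ d₁ hz o := (h.nomO d₁ d₂ hz o).symm
  u1 := h.u2
  u2 := h.u1
  q d₂ d₁ r hz := (h.q d₁ d₂ r hz).symm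

theorem exists_injective_succ {P₁ : Δ₁ → Prop} {P₂ : Δ₂ → Prop} {d₁ : Δ₁} {d₂ : Δ₂} {r : R}
    {n : ℕ} (h : IsBisim I J Z) (hP : ∀ e₁ e₂, Z e₁ e₂ → P₁ e₁ → P₂ e₂) (hz : Z d₁ d₂)
    (hf : ∃ f : Fin n → Δ₁, Function.Injective f ∧ ∀ k, (d₁, f k) ∈ I.rel r ∧ P₁ (f k)) :
    ∃ g : Fin n → Δ₂, Function.Injective g ∧ ∀ k, (d₂, g k) ∈ J.rel r ∧ P₂ (g k) := by
  obtain ⟨f, hf_inj, hf⟩ := hf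
  obtain ⟨forth, back⟩ := h.q d₁ d₂ r hz
  choose g hg_succ hg_rel using fun k => (forth (f k) (hf k).1).exists
  refine ⟨g, fun k k' hgk => hf_inj ?_, fun k => ⟨hg_succ k, hP _ _ (hg_rel k) (hf k).2⟩⟩
  obtain ⟨_, -, hunique⟩ := back (g k) (hg_succ k)
  rw [hunique (f k) ⟨(hf k).1, hg_rel k⟩, hunique (f k') ⟨(hf k').1, hgk ▸ hg_rel k'⟩]

theorem dsat_imp (h : IsBisim I J Z) (φ : CQ C R O) {x₁ : Δ₁} {x₂ : Δ₂} (hz : Z x₁ x₂) :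
    dsat I x₁ φ → dsat J x₂ φ := by
  induction φ generalizing Δ₁ Δ₂ with
  | top => exact fun _ => trivial
  | atom c => exact (h.alc1 x₁ x₂ hz c).1
  | nomC o => exact (h.nomO x₁ x₂ hz o).1
  | neg φ ih => exact fun hn hφ => hn (ih h.symm hz hφ)
  | or φ ψ ihφ ihψ => exact Or.imp (ihφ h hz) (ihψ h hz)
  | ex r φ ih =>
    rintro ⟨e₁, he₁, hφ⟩
    obtain ⟨e₂, he₂, hz'⟩ := h.alc2 x₁ x₂ e₁ r hz he₁
    exact ⟨e₂, he₂, ih h hz' hφ⟩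
  | exU φ ih =>
    rintro ⟨e₁, hφ⟩
    obtain ⟨e₂, hz'⟩ := h.u1 e₁
    exact ⟨e₂, ih h hz' hφ⟩
  | lt n r φ ih =>
    exact fun hlt hJ => hlt (h.symm.exists_injective_succ (fun _ _ hz' => ih h.symm hz') hz hJ)

end IsBisim

/-- An ALCQUO-bisimulation preserves all ALCQUO concepts. -/
theorem bisim_invariance {C R O Δ₁ Δ₂ : Type}
    (I : DLI C R O Δ₁) (J : DLI C R O Δ₂) (Z : Δ₁ → Δ₂ → Prop)
    (h : IsBisim I J Z) :
    ∀ (φ : CQ C R O) (x₁ : Δ₁) (x₂ : Δ₂), Z x₁ x₂ → (dsat I x₁ φ ↔ dsat J x₂ φ) :=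
  fun φ _ _ hz => ⟨h.dsat_imp φ hz, h.symm.dsat_imp φ hz⟩
end

section
/- For any graph G, role R, nodes i, j with no edge from i to j labeled R, and any element n with n = i: if the unique added pair makes j a new R-successor of i, then n ∈ ((< m R φ))^{G[add_E(e,i,j,R)]} if and only if (when j ∈ φ^{G[add_E(e,i,j,R)]} and (i,j) ∉ R^G) n ∈ (< (m−1) R φ[add_E(e,i,j,R)])^G, and otherwise n ∈ (< m R φ[add_E(e,i,j,R)])^G. For n ≠ i, n satisfies (< m R φ) in G[add_E(e,i,j,R)] iff n ∈ (< m R φ[add_E(e,i,j,R)])^G. -/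
structure LDGraph (V Ed C R : Type) where
  N : Set V
  E : Set Ed
  phiN : V → Set C
  phiE : Ed → R
  src : Ed → V
  tgt : Ed → V

def roleInterp {V Ed C R : Type} (G : LDGraph V Ed C R) (r : R) : Set (V × V) :=
  {p | ∃ e ∈ G.E, G.src e = p.1 ∧ G.tgt e = p.2 ∧ G.phiE e = r}

/-- Edge addition `add_E(e,i,j,r)`: adds the fresh edge `e` with source `i`,
target `j` and label `r`. -/
def LDGraph.addE {V Ed C R : Type} [DecidableEq Ed] (G : LDGraph V Ed C R)
    (e : Ed) (i j : V) (r : R) : LDGraph V Ed C R where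
  N := G.N
  E := insert e G.E
  phiN := G.phiN
  phiE := fun x => if x = e then r else G.phiE x
  src := fun x => if x = e then i else G.src x
  tgt := fun x => if x = e then j else G.tgt x

/-- `n` satisfies the counting concept `(< m R P)` in `G`: `n` has fewer than `m`
distinct `R`-successors belonging to `P`. -/
def countLT {V Ed C R : Type} (G : LDGraph V Ed C R) (r : R) (P : Set V) (m : ℕ)
    (n : V) : Prop :=
  ¬ ∃ f : Fin m → V, Function.Injective f ∧ ∀ k, (n, f k) ∈ roleInterp G r ∧ f k ∈ P

/-!
Adding the fresh edge `e : i → j` labelled `r` only adjoins `j` to the `r`-successors of `i`.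
Hence the set of qualifying (`P`-) successors of every node is unchanged, except that of `i` when
`j ∈ P`, which gains `j`; this is a new element because `(i, j) ∉ R^G`. Counting the qualifying
successors in `ℕ∞`, "fewer than `m` after adding one" is "fewer than `m - 1` before".
-/

theorem Set.natCast_le_encard_iff_exists_injective {α : Type*} {S : Set α} {m : ℕ} :
    (m : ℕ∞) ≤ S.encard ↔ ∃ f : Fin m → α, Function.Injective f ∧ ∀ k, f k ∈ S := by
  constructor
  · intro hm
    obtain ⟨t, htS, ht⟩ := Set.exists_subset_encard_eq hm
    have : Finite t := Set.finite_of_encard_eq_coe ht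
    have hcard : Nat.card t = m := by
      rw [Nat.card_coe_set_eq, Set.ncard_def, ht, ENat.toNat_natCast]
    let g := (Finite.equivFinOfCardEq hcard).symm
    exact ⟨fun k => g k, Subtype.val_injective.comp g.injective, fun k => htS (g k).2⟩
  · rintro ⟨f, hf, hfS⟩
    simpa using Set.encard_le_encard_of_injOn (s := Set.univ) (fun k _ => hfS k) hf.injOn

theorem ENat.add_one_lt_natCast_iff {a : ℕ∞} {m : ℕ} : a + 1 < m ↔ a < (m - 1 : ℕ) := by
  cases m with
  | zero => simp
  | succ k => simp [ENat.add_lt_add_iff_right ENat.one_ne_top]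

namespace LDGraph

variable {V Ed C R : Type}

def succIn (G : LDGraph V Ed C R) (r : R) (P : Set V) (n : V) : Set V :=
  {x | (n, x) ∈ roleInterp G r ∧ x ∈ P}

theorem countLT_iff_encard_succIn_lt (G : LDGraph V Ed C R) (r : R) (P : Set V) (m : ℕ)
    (n : V) : countLT G r P m n ↔ (G.succIn r P n).encard < m := by
  rw [countLT, ← not_le, Set.natCast_le_encard_iff_exists_injective]
  rfl

variable [DecidableEq Ed] {G : LDGraph V Ed C R} {e : Ed}

theorem roleInterp_addE (he : e ∉ G.E) (i j : V) (r : R) :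
    roleInterp (G.addE e i j r) r = insert (i, j) (roleInterp G r) := by
  ext ⟨a, b⟩
  simp only [roleInterp, addE, Set.mem_ofPred_eq, Set.mem_insert_iff, or_and_right, exists_or,
    exists_eq_left, if_true, and_true, Prod.mk.injEq]
  refine or_congr ⟨fun ⟨ha, hb⟩ => ⟨ha.symm, hb.symm⟩, fun ⟨ha, hb⟩ => ⟨ha.symm, hb.symm⟩⟩
    (exists_congr fun e' => and_congr_right fun he' => ?_)
  simp only [if_neg (ne_of_mem_of_not_mem he' he)]

theorem succIn_addE_of_mem (he : e ∉ G.E) {i j : V} (r : R) {P : Set V} (hj : j ∈ P) :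
    (G.addE e i j r).succIn r P i = insert j (G.succIn r P i) := by
  ext x
  simp only [succIn, roleInterp_addE he, Set.mem_ofPred_eq, Set.mem_insert_iff, Prod.mk.injEq]
  grind

theorem succIn_addE_of_ne_or_notMem (he : e ∉ G.E) {i j n : V} (r : R) {P : Set V}
    (h : n ≠ i ∨ j ∉ P) : (G.addE e i j r).succIn r P n = G.succIn r P n := by
  ext x
  simp only [succIn, roleInterp_addE he, Set.mem_ofPred_eq, Set.mem_insert_iff, Prod.mk.injEq]
  grind

end LDGraph

open LDGraph in
/-- The effect of edge addition on counting quantifiers, where `P` stands for the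
extension `φ^{G[add_E(e,i,j,R)]}` of the qualifying concept after the action:
if the added edge makes `j` a new `R`-successor of `i` (i.e. `(i,j) ∉ R^G`), then
for `n = i`, when `j ∈ P` the count threshold drops by one, and otherwise it is
unchanged; for `n ≠ i` nothing changes. -/
theorem count_subst_addE {V Ed C R : Type} [DecidableEq Ed]
    (G : LDGraph V Ed C R) (e : Ed) (i j : V) (r : R)
    (he : e ∉ G.E) (hne : (i, j) ∉ roleInterp G r) (P : Set V) (m : ℕ) :
    (j ∈ P → (countLT (G.addE e i j r) r P m i ↔ countLT G r P (m - 1) i)) ∧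
    (j ∉ P → (countLT (G.addE e i j r) r P m i ↔ countLT G r P m i)) ∧
    (∀ n : V, n ≠ i → (countLT (G.addE e i j r) r P m n ↔ countLT G r P m n)) := by
  refine ⟨fun hjP => ?_, fun hjP => ?_, fun n hn => ?_⟩
  · have hj : j ∉ G.succIn r P i := fun h => hne h.1
    rw [countLT_iff_encard_succIn_lt, countLT_iff_encard_succIn_lt, succIn_addE_of_mem he r hjP,
      Set.encard_insert_of_notMem hj, ENat.add_one_lt_natCast_iff]
  · rw [countLT_iff_encard_succIn_lt, countLT_iff_encard_succIn_lt,
      succIn_addE_of_ne_or_notMem he r (.inr hjP)]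
  · rw [countLT_iff_encard_succIn_lt, countLT_iff_encard_succIn_lt,
      succIn_addE_of_ne_or_notMem he r (.inl hn)]
end
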